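/- arXiv:2402.18703 — 3 statements merged into one kernel-verified Lean document; each statement's English description precedes it below -/
import Mathlib

section
/- Let Φ be a quantum channel on M_d(ℂ) whose operator system S_Φ is closed under matrix multiplication. Then the following are equivalent: (1) the one-shot zero-error entanglement-assisted classical capacity of Φ vanishes; (2) Φ is c-scrambling (the one-shot zero-error classical capacity of Φ vanishes); (3) the commutant {X ∈ M_d(ℂ) : XY = YX for all Y ∈ S_Φ} equals ℂ·1. -/
open Matrix Filter
open scoped ComplexOrder

/-- The algebra of `n × n` complex matrices. -/
abbrev Mat (n : ℕ) := Matrix (Fin n) (Fin n) ℂ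

/-- A linear map between matrix algebras is a quantum channel if it admits a Kraus
representation `Φ(X) = ∑ i, K i * X * (K i)ᴴ` with `∑ i, (K i)ᴴ * K i = 1`. -/
def IsChannel {m n : ℕ} (Φ : Matrix (Fin m) (Fin m) ℂ →ₗ[ℂ] Mat n) : Prop :=
  ∃ (p : ℕ) (K : Fin p → Matrix (Fin n) (Fin m) ℂ),
    (∀ X, Φ X = ∑ i, K i * X * (K i)ᴴ) ∧ ∑ i, (K i)ᴴ * K i = 1

/-- A quantum state: positive semidefinite with unit trace. -/
def IsState {n : ℕ} (ρ : Mat n) : Prop := ρ.PosSemidef ∧ ρ.trace = 1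

/-- The rank-one matrix `|ψ⟩⟨ψ|`. -/
def pureState {ι : Type*} (ψ : ι → ℂ) : Matrix ι ι ℂ :=
  Matrix.of fun i j => ψ i * star (ψ j)

/-- `ψ` is a unit vector. -/
def IsUnitVec {ι : Type*} [Fintype ι] (ψ : ι → ℂ) : Prop :=
  ∑ i, star (ψ i) * ψ i = 1

/-- c-scrambling: outputs of orthogonal pure states are never orthogonal. -/
def CScrambling {n : ℕ} (Φ : Mat n →ₗ[ℂ] Mat n) : Prop :=
  ∀ ψ φ : Fin n → ℂ, IsUnitVec ψ → IsUnitVec φ → ∑ i, star (ψ i) * φ i = 0 →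
    0 < (Φ (pureState ψ) * Φ (pureState φ)).trace

/-- A subspace `C ⊆ ℂ^n` is correctable for `Φ`. -/
def Correctable {n : ℕ} (Φ : Mat n →ₗ[ℂ] Mat n) (C : Submodule ℂ (Fin n → ℂ)) : Prop :=
  ∃ R : Mat n →ₗ[ℂ] Mat n, IsChannel R ∧
    ∀ ρ : Mat n, IsState ρ → LinearMap.range ρ.mulVecLin ≤ C → R (Φ ρ) = ρ

/-- q-scrambling: no correctable subspace of dimension ≥ 2. -/
def QScrambling {n : ℕ} (Φ : Mat n →ₗ[ℂ] Mat n) : Prop :=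
  ∀ C : Submodule ℂ (Fin n → ℂ), Correctable Φ C → Module.finrank ℂ C ≤ 1

/-- Apply `Φ` to the first tensor factor: `(Φ ⊗ id) M`. -/
def tensorId {d₀ n d₁ : ℕ} (Φ : Matrix (Fin d₀) (Fin d₀) ℂ →ₗ[ℂ] Mat n)
    (M : Matrix (Fin d₀ × Fin d₁) (Fin d₀ × Fin d₁) ℂ) :
    Matrix (Fin n × Fin d₁) (Fin n × Fin d₁) ℂ :=
  Matrix.of fun p q => Φ (Matrix.of fun k l => M (k, p.2) (l, q.2)) p.1 q.1

/-- Vanishing one-shot zero-error entanglement-assisted classical capacity. -/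
def VanishingC0E {n : ℕ} (Φ : Mat n →ₗ[ℂ] Mat n) : Prop :=
  ∀ (d₀ d₁ : ℕ), 0 < d₀ → 0 < d₁ → ∀ ψ : Fin d₀ × Fin d₁ → ℂ, IsUnitVec ψ →
    ∀ E₁ E₂ : Matrix (Fin d₀) (Fin d₀) ℂ →ₗ[ℂ] Mat n, IsChannel E₁ → IsChannel E₂ →
      0 < (tensorId (Φ ∘ₗ E₁) (pureState ψ) * tensorId (Φ ∘ₗ E₂) (pureState ψ)).trace

/-- Mixing channel: `Φ^n X → Tr(X) ρ⋆` entrywise. -/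
def Mixing {n : ℕ} (Φ : Module.End ℂ (Mat n)) : Prop :=
  ∃ ρ : Mat n, IsState ρ ∧
    ∀ X : Mat n, Tendsto (fun k => (Φ ^ k) X) atTop (nhds (X.trace • ρ))

/-- Strictly positive channel: every state is sent to a positive definite matrix. -/
def StrictlyPositive {n : ℕ} (Φ : Mat n →ₗ[ℂ] Mat n) : Prop :=
  ∀ ρ : Mat n, IsState ρ → (Φ ρ).PosDef

/-- Primitive channel: mixing with positive definite invariant state. -/
def Primitive {n : ℕ} (Φ : Module.End ℂ (Mat n)) : Prop :=
  ∃ ρ : Mat n, IsState ρ ∧ ρ.PosDef ∧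
    ∀ X : Mat n, Tendsto (fun k => (Φ ^ k) X) atTop (nhds (X.trace • ρ))

/-- Classical scrambling time `c(Φ)`. -/
noncomputable def cTime {n : ℕ} (Φ : Module.End ℂ (Mat n)) : ℕ∞ :=
  sInf {N : ℕ∞ | ∃ k : ℕ, N = k ∧ 1 ≤ k ∧ CScrambling (Φ ^ k)}

/-- Quantum scrambling time `q(Φ)`. -/
noncomputable def qTime {n : ℕ} (Φ : Module.End ℂ (Mat n)) : ℕ∞ :=
  sInf {N : ℕ∞ | ∃ k : ℕ, N = k ∧ 1 ≤ k ∧ QScrambling (Φ ^ k)}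

/-- Entanglement-assisted classical scrambling time `c_E(Φ)`. -/
noncomputable def cETime {n : ℕ} (Φ : Module.End ℂ (Mat n)) : ℕ∞ :=
  sInf {N : ℕ∞ | ∃ k : ℕ, N = k ∧ 1 ≤ k ∧ VanishingC0E (Φ ^ k)}

/-- Wielandt index `w(Φ)`. -/
noncomputable def wTime {n : ℕ} (Φ : Module.End ℂ (Mat n)) : ℕ∞ :=
  sInf {N : ℕ∞ | ∃ k : ℕ, N = k ∧ 1 ≤ k ∧ StrictlyPositive (Φ ^ k)}

/-- `M(Φ)`: the maximal size of a zero-error classical code for `Φ`. -/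
noncomputable def Mclassical {n : ℕ} (Φ : Mat n →ₗ[ℂ] Mat n) : ℕ :=
  sSup {M : ℕ | ∃ ψ : Fin M → Fin n → ℂ, (∀ m, IsUnitVec (ψ m)) ∧
    ∀ m m', m ≠ m' → (Φ (pureState (ψ m)) * Φ (pureState (ψ m'))).trace = 0}

/-- `D(Φ)`: the maximal dimension of a correctable subspace for `Φ`. -/
noncomputable def Dquantum {n : ℕ} (Φ : Mat n →ₗ[ℂ] Mat n) : ℕ :=
  sSup {M : ℕ | ∃ C : Submodule ℂ (Fin n → ℂ), Correctable Φ C ∧ Module.finrank ℂ C = M}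

/-- `M_E(Φ)`: the maximal size of an entanglement-assisted zero-error classical code. -/
noncomputable def MEclassical {n : ℕ} (Φ : Mat n →ₗ[ℂ] Mat n) : ℕ :=
  sSup {M : ℕ | ∃ (d₀ d₁ : ℕ) (ψ : Fin d₀ × Fin d₁ → ℂ), 0 < d₀ ∧ 0 < d₁ ∧ IsUnitVec ψ ∧
    ∃ E : Fin M → (Matrix (Fin d₀) (Fin d₀) ℂ →ₗ[ℂ] Mat n),
      (∀ m, IsChannel (E m)) ∧
      ∀ m m', m ≠ m' →
        (tensorId (Φ ∘ₗ E m) (pureState ψ) * tensorId (Φ ∘ₗ E m') (pureState ψ)).trace = 0}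

/-- The ordered product `K_{i 0} ⋯ K_{i (n-1)}` of Kraus operators. -/
noncomputable def krausProd {d p : ℕ} (K : Fin p → Mat d) {n : ℕ} (i : Fin n → Fin p) : Mat d :=
  (List.ofFn fun t => K (i t)).prod

/-- The operator system of `Φ^n`, for `Φ` with Kraus operators `K`. -/
noncomputable def opSys {d p : ℕ} (K : Fin p → Mat d) (n : ℕ) : Submodule ℂ (Mat d) :=
  Submodule.span ℂ {X | ∃ i j : Fin n → Fin p, X = (krausProd K i)ᴴ * krausProd K j}

/-- `𝒦_n(Φ)`: the span of `n`-fold products of Kraus operators. -/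
noncomputable def kSpan {d p : ℕ} (K : Fin p → Mat d) (n : ℕ) : Submodule ℂ (Mat d) :=
  Submodule.span ℂ {X | ∃ i : Fin n → Fin p, X = krausProd K i}

/-- `A` is column stochastic. -/
def ColumnStochastic {d : ℕ} (A : Matrix (Fin d) (Fin d) ℝ) : Prop :=
  (∀ i j, 0 ≤ A i j) ∧ ∀ j, ∑ i, A i j = 1

/-- The CDUC map `Φ_{A,B}(X) = ∑ᵢⱼ A i j * X j j |i⟩⟨i| + ∑_{i≠j} B i j * X i j |i⟩⟨j|`. -/
noncomputable def cducMap {d : ℕ} (A : Matrix (Fin d) (Fin d) ℝ) (B : Mat d) :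
    Mat d →ₗ[ℂ] Mat d where
  toFun X := Matrix.of fun i j =>
    if i = j then ∑ k, (A i k : ℂ) * X k k else B i j * X i j
  map_add' X Y := by
    ext i j
    by_cases h : i = j <;>
      simp [h, Matrix.add_apply, mul_add, Finset.sum_add_distrib]
  map_smul' c X := by
    ext i j
    by_cases h : i = j <;>
      simp [h, Matrix.smul_apply, smul_eq_mul, Finset.mul_sum, mul_left_comm]

/-- The DUC map `Φ_{A,C}(X) = ∑ᵢⱼ A i j * X j j |i⟩⟨i| + ∑_{i≠j} C i j * X j i |i⟩⟨j|`. -/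
noncomputable def ducMap {d : ℕ} (A : Matrix (Fin d) (Fin d) ℝ) (C : Mat d) :
    Mat d →ₗ[ℂ] Mat d where
  toFun X := Matrix.of fun i j =>
    if i = j then ∑ k, (A i k : ℂ) * X k k else C i j * X j i
  map_add' X Y := by
    ext i j
    by_cases h : i = j <;>
      simp [h, Matrix.add_apply, mul_add, Finset.sum_add_distrib]
  map_smul' c X := by
    ext i j
    by_cases h : i = j <;>
      simp [h, Matrix.smul_apply, smul_eq_mul, Finset.mul_sum, mul_left_comm]

/-- The classical channel `Φ_A(X) = ∑ᵢⱼ A i j * X j j |i⟩⟨i|` of a stochastic matrix `A`. -/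
noncomputable def classicalChannel {d : ℕ} (A : Matrix (Fin d) (Fin d) ℝ) :
    Mat d →ₗ[ℂ] Mat d :=
  cducMap A 0

/-- A stochastic matrix is scrambling if any two columns overlap in some row. -/
def MatScrambling {d : ℕ} (A : Matrix (Fin d) (Fin d) ℝ) : Prop :=
  ∀ i j, ∃ k, 0 < A k i * A k j

/-- A matrix with strictly positive entries. -/
def MatStrictlyPositive {d : ℕ} (A : Matrix (Fin d) (Fin d) ℝ) : Prop :=
  ∀ i j, 0 < A i j

/-- A stochastic matrix is mixing if `1` is an eigenvalue of algebraic multiplicity one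
and there is no other eigenvalue of modulus one. -/
def MatMixing {d : ℕ} (A : Matrix (Fin d) (Fin d) ℝ) : Prop :=
  Polynomial.rootMultiplicity 1 (Matrix.charpoly (A.map Complex.ofReal)) = 1 ∧
  ∀ μ : ℂ, ‖μ‖ = 1 → (Matrix.charpoly (A.map Complex.ofReal)).IsRoot μ → μ = 1

/-- A stochastic matrix is primitive if it is mixing and its invariant probability
vector is entrywise strictly positive. -/
def MatPrimitive {d : ℕ} (A : Matrix (Fin d) (Fin d) ℝ) : Prop :=
  MatMixing A ∧
    ∀ v : Fin d → ℝ, (∀ i, 0 ≤ v i) → ∑ i, v i = 1 → A *ᵥ v = v → ∀ i, 0 < v i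

/-- The scrambling time of a stochastic matrix. -/
noncomputable def cMat {d : ℕ} (A : Matrix (Fin d) (Fin d) ℝ) : ℕ∞ :=
  sInf {N : ℕ∞ | ∃ k : ℕ, N = k ∧ 1 ≤ k ∧ MatScrambling (A ^ k)}

/-- The Wielandt index of a stochastic matrix. -/
noncomputable def wMat {d : ℕ} (A : Matrix (Fin d) (Fin d) ℝ) : ℕ∞ :=
  sInf {N : ℕ∞ | ∃ k : ℕ, N = k ∧ 1 ≤ k ∧ MatStrictlyPositive (A ^ k)}

/-- The matrix `A_d` from the paper (0-indexed). -/
noncomputable def Amat (d : ℕ) : Matrix (Fin d) (Fin d) ℝ :=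
  Matrix.of fun i j =>
    if (i : ℕ) = d - 1 ∧ (j : ℕ) = 0 then 1
    else if (j : ℕ) = 1 ∧ ((i : ℕ) = 0 ∨ (i : ℕ) = d - 1) then 1 / 2
    else if 2 ≤ (j : ℕ) ∧ (i : ℕ) + 1 = (j : ℕ) then 1
    else 0

/-!
Both capacities are governed by orthogonality to `S` for the trace form `(A, B) ↦ Tr(AB)`.
Since `Tr(Φ(ψ)Φ(φ)) = ∑ᵢⱼ |⟨Kᵢψ, Kⱼφ⟩|²`, it vanishes iff `|φ⟩⟨ψ|` is trace-orthogonal to `S`;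
likewise the entanglement-assisted overlap vanishes iff every `Mⱼ Ψ Ψᴴ Lᵢᴴ` is, where `Ψ` is the
shared state reshaped into a matrix and `Lᵢ`, `Mⱼ` are Kraus operators of the two encodings.

If `X` commutes with `S` but is not scalar, a unit vector `φ` in an eigenspace of `X` and a unit
vector `ψ` orthogonal to that (`S`-invariant) eigenspace violate c-scrambling. Conversely, if the
commutant is trivial, the projection onto the unital `*`-algebra `S` along its trace-orthogonal
complement is a left `S`-module map, hence right multiplication by its value at `1`, i.e. the
identity: `S` has no orthogonal complement (double commutant theorem). Then all `Mⱼ Ψ Ψᴴ Lᵢᴴ`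
vanish, and trace preservation of the encodings gives `Ψ Ψᴴ = 0`, absurd. Finally c-scrambling is
the special case of a trivial ancilla with encodings that prepare pure states.
-/

lemma pureState_eq_vecMulVec {ι : Type*} (ψ : ι → ℂ) : pureState ψ = vecMulVec ψ (star ψ) := rfl

lemma trace_pureState_mul_pureState {ι : Type*} [Fintype ι] (u v : ι → ℂ) :
    (pureState u * pureState v).trace = (Complex.normSq (star u ⬝ᵥ v) : ℂ) := by
  rw [pureState_eq_vecMulVec, pureState_eq_vecMulVec, vecMulVec_mul_vecMulVec, trace_vecMulVec,
    dotProduct_smul, smul_eq_mul, Complex.normSq_eq_conj_mul_self, ← Complex.star_def,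
    star_dotProduct, star_star, dotProduct_comm, mul_comm]

lemma sum_mul_pureState_mul_conjTranspose {ι m n : Type*} [Fintype ι] [Fintype n]
    (K : ι → Matrix m n ℂ) (ψ : n → ℂ) :
    ∑ i, K i * pureState ψ * (K i)ᴴ = ∑ i, pureState (K i *ᵥ ψ) := by
  simp only [pureState_eq_vecMulVec, mul_vecMulVec, vecMulVec_mul, star_mulVec]

lemma trace_sum_pureState_mul_sum_pureState_pos_iff {ι γ δ : Type*} [Fintype ι] [Fintype γ]
    [Fintype δ] (v : γ → ι → ℂ) (w : δ → ι → ℂ) :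
    0 < ((∑ c, pureState (v c)) * ∑ e, pureState (w e)).trace ↔ ∃ c e, star (v c) ⬝ᵥ w e ≠ 0 := by
  simp only [Finset.sum_mul_sum, trace_sum, trace_pureState_mul_pureState]
  rw [← Fintype.sum_prod_type', ← Complex.ofReal_sum, Complex.zero_lt_real,
    Finset.sum_pos_iff_of_nonneg fun _ _ => Complex.normSq_nonneg _]
  simp [Complex.normSq_pos]

def traceForm (R n : Type*) [CommSemiring R] [Fintype n] : LinearMap.BilinForm R (Matrix n n R) :=
  (LinearMap.mul R (Matrix n n R)).compr₂ (traceLinearMap n R R)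

@[simp]
lemma traceForm_apply {R n : Type*} [CommSemiring R] [Fintype n] (X Y : Matrix n n R) :
    traceForm R n X Y = (X * Y).trace := rfl

section DoubleCommutant

variable {n : Type*} [Fintype n] {S : Submodule ℂ (Matrix n n ℂ)}

lemma isCompl_traceForm_orthogonal (hstar : ∀ X ∈ S, Xᴴ ∈ S) :
    IsCompl S ((traceForm ℂ n).orthogonal S) := by
  refine (LinearMap.BilinForm.isCompl_orthogonal_iff_disjoint fun X Y h => ?_).mpr ?_
  · rwa [traceForm_apply, trace_mul_comm]
  · refine Submodule.disjoint_def.mpr fun Z hZ hZ' => ?_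
    exact trace_conjTranspose_mul_self_eq_zero_iff.mp (hZ' _ (hstar Z hZ))

lemma mul_mem_traceForm_orthogonal (hmul : ∀ X ∈ S, ∀ Y ∈ S, X * Y ∈ S) {X Z : Matrix n n ℂ}
    (hX : X ∈ S) (hZ : Z ∈ (traceForm ℂ n).orthogonal S) : X * Z ∈ (traceForm ℂ n).orthogonal S :=
  fun Y hY => by rw [traceForm_apply, ← Matrix.mul_assoc]; exact hZ _ (hmul Y hY X hX)

lemma projection_mul_left (hmul : ∀ X ∈ S, ∀ Y ∈ S, X * Y ∈ S) {J : Submodule ℂ (Matrix n n ℂ)}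
    (hJ : ∀ X ∈ S, ∀ Z ∈ J, X * Z ∈ J) (h : IsCompl S J) {X : Matrix n n ℂ} (hX : X ∈ S)
    (Z : Matrix n n ℂ) : S.projection J h (X * Z) = X * S.projection J h Z := by
  set P := S.projection J h
  have hsplit : X * Z = X * P Z + X * (Z - P Z) := by rw [← Matrix.mul_add, add_sub_cancel]
  rw [hsplit, map_add,
    Submodule.projection_apply_of_mem_left h (hmul X hX _ (S.projection_apply_mem h Z)),
    (Submodule.projection_apply_eq_zero_iff h).mpr (hJ X hX _ (S.sub_projection_mem h Z)), add_zero]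

lemma eq_mul_map_one_of_map_mul_left [DecidableEq n]
    (hcomm : ∀ X : Matrix n n ℂ, (∀ Y ∈ S, X * Y = Y * X) → ∃ c : ℂ, X = c • 1)
    (P : Matrix n n ℂ →ₗ[ℂ] Matrix n n ℂ) (hP : ∀ X ∈ S, ∀ Z, P (X * Z) = X * P Z)
    (T : Matrix n n ℂ) : P T = T * P 1 := by
  -- `(a, b) ↦ P (single b k 1) a j` is the matrix of `v ↦ P (v eₖᵀ) eⱼ`, which commutes with `S`.
  have hscalar : ∀ j k, ∃ c : ℂ, (of fun a b => P (single b k 1) a j) = c • 1 := by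
    intro j k
    refine hcomm _ fun X hX => ?_
    ext a c
    have hcol : X * single c k (1 : ℂ) = ∑ b, X b c • single b k 1 := by
      ext a' b'
      simp [mul_apply, single, Matrix.sum_apply, mul_ite, ite_and]
    have := congrFun₂ (hP X hX (single c k 1)) a j
    simp only [hcol, map_sum, map_smul, Matrix.sum_apply, Matrix.smul_apply, smul_eq_mul] at this
    simp only [mul_apply, of_apply, mul_comm (P _ a j), this]
  choose c hc using hscalar
  set D : Matrix n n ℂ := of fun k j => c j k
  have hsingle : ∀ b k, P (single b k 1) = single b k 1 * D := by
    intro b k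
    ext a j
    have := congrFun₂ (hc j k) a b
    simp only [of_apply, Matrix.smul_apply, one_apply, smul_eq_mul] at this
    by_cases hab : a = b
    · subst hab; simp [this, D]
    · simp [this, hab, single_mul_apply_of_ne _ _ _ _ _ hab]
  have hPD : P = LinearMap.mulRight ℂ D :=
    Matrix.ext_linearMap ℂ fun b k => LinearMap.ext_ring (hsingle b k)
  simp [hPD]

theorem traceForm_orthogonal_eq_bot_of_commutant [DecidableEq n] (hone : (1 : Matrix n n ℂ) ∈ S)
    (hstar : ∀ X ∈ S, Xᴴ ∈ S) (hmul : ∀ X ∈ S, ∀ Y ∈ S, X * Y ∈ S)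
    (hcomm : ∀ X : Matrix n n ℂ, (∀ Y ∈ S, X * Y = Y * X) → ∃ c : ℂ, X = c • 1) :
    (traceForm ℂ n).orthogonal S = ⊥ := by
  have h := isCompl_traceForm_orthogonal hstar
  have hP : ∀ X ∈ S, ∀ Z, S.projection _ h (X * Z) = X * S.projection _ h Z :=
    fun X hX => projection_mul_left hmul (fun _ hX _ => mul_mem_traceForm_orthogonal hmul hX) h hX
  have hid : ∀ T, S.projection _ h T = T := fun T => by
    rw [eq_mul_map_one_of_map_mul_left hcomm _ hP, Submodule.projection_apply_of_mem_left h hone,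
      Matrix.mul_one]
  refine (Submodule.eq_bot_iff _).mpr fun Z hZ => ?_
  rw [← hid Z, (Submodule.projection_apply_eq_zero_iff h).mpr hZ]

end DoubleCommutant

section OperatorSystem

variable {ι m n : Type*} [Fintype m]

def krausOpSys (K : ι → Matrix m n ℂ) : Submodule ℂ (Matrix n n ℂ) :=
  Submodule.span ℂ {X | ∃ i j, X = (K i)ᴴ * K j}

lemma one_mem_krausOpSys [Fintype ι] [DecidableEq n] {K : ι → Matrix m n ℂ}
    (hTP : ∑ i, (K i)ᴴ * K i = 1) : 1 ∈ krausOpSys K :=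
  hTP ▸ Submodule.sum_mem _ fun i _ => Submodule.subset_span ⟨i, i, rfl⟩

lemma conjTranspose_mem_krausOpSys {K : ι → Matrix m n ℂ} {X : Matrix n n ℂ}
    (hX : X ∈ krausOpSys K) : Xᴴ ∈ krausOpSys K := by
  induction hX using Submodule.span_induction with
  | mem x h =>
    obtain ⟨i, j, rfl⟩ := h
    rw [conjTranspose_mul, conjTranspose_conjTranspose]
    exact Submodule.subset_span ⟨j, i, rfl⟩
  | zero => simp
  | add x y _ _ hx hy => simpa using Submodule.add_mem _ hx hy
  | smul c x _ hx => simpa using Submodule.smul_mem _ (star c) hx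

lemma mem_traceForm_orthogonal_krausOpSys_iff [Fintype n] {K : ι → Matrix m n ℂ}
    {Z : Matrix n n ℂ} :
    Z ∈ (traceForm ℂ n).orthogonal (krausOpSys K) ↔ ∀ i j, ((K i)ᴴ * K j * Z).trace = 0 := by
  refine ⟨fun h i j => h _ (Submodule.subset_span ⟨i, j, rfl⟩), fun h Y hY => ?_⟩
  refine (Submodule.span_le (p := LinearMap.ker ((traceForm ℂ n).flip Z))).mpr ?_ hY
  rintro _ ⟨i, j, rfl⟩
  exact h i j

end OperatorSystem

lemma star_mulVec_dotProduct_mulVec {m n : Type*} [Fintype m] [Fintype n]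
    (A B : Matrix m n ℂ) (u v : n → ℂ) :
    star (A *ᵥ u) ⬝ᵥ (B *ᵥ v) = (Aᴴ * B * vecMulVec v (star u)).trace := by
  rw [mul_vecMulVec, trace_vecMulVec, star_mulVec, ← dotProduct_mulVec, mulVec_mulVec,
    dotProduct_comm]

lemma trace_map_pureState_mul_map_pureState_pos_iff {ι m n : Type*} [Fintype ι] [Fintype m]
    [Fintype n] {Φ : Matrix n n ℂ →ₗ[ℂ] Matrix m m ℂ} {K : ι → Matrix m n ℂ}
    (hK : ∀ X, Φ X = ∑ i, K i * X * (K i)ᴴ) (ψ φ : n → ℂ) :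
    0 < (Φ (pureState ψ) * Φ (pureState φ)).trace ↔
      vecMulVec φ (star ψ) ∉ (traceForm ℂ n).orthogonal (krausOpSys K) := by
  simp only [hK, sum_mul_pureState_mul_conjTranspose, trace_sum_pureState_mul_sum_pureState_pos_iff,
    mem_traceForm_orthogonal_krausOpSys_iff, star_mulVec_dotProduct_mulVec, not_forall]

lemma star_ofLp_dotProduct_ofLp {n : Type*} [Fintype n] (x y : EuclideanSpace ℂ n) :
    star x.ofLp ⬝ᵥ y.ofLp = inner ℂ x y := by
  rw [EuclideanSpace.inner_eq_star_dotProduct, dotProduct_comm]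

lemma isUnitVec_ofLp {n : Type*} [Fintype n] {x : EuclideanSpace ℂ n} (hx : ‖x‖ = 1) :
    IsUnitVec x.ofLp := by
  change star x.ofLp ⬝ᵥ x.ofLp = 1
  rw [star_ofLp_dotProduct_ofLp, inner_self_eq_norm_sq_to_K, hx]
  simp

lemma exists_norm_one_mem_and_mem_orthogonal {E : Type*} [NormedAddCommGroup E]
    [InnerProductSpace ℂ E] [FiniteDimensional ℂ E] {V : Submodule ℂ E} (h₀ : V ≠ ⊥)
    (h₁ : V ≠ ⊤) : ∃ φ ∈ V, ∃ ψ ∈ Vᗮ, ‖φ‖ = 1 ∧ ‖ψ‖ = 1 := by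
  have : Nontrivial V := Submodule.nontrivial_iff_ne_bot.mpr h₀
  have : Nontrivial Vᗮ :=
    Submodule.nontrivial_iff_ne_bot.mpr (mt Submodule.orthogonal_eq_bot_iff.mp h₁)
  obtain ⟨φ, hφ⟩ := exists_norm_eq V zero_le_one
  obtain ⟨ψ, hψ⟩ := exists_norm_eq Vᗮ zero_le_one
  exact ⟨φ, φ.2, ψ, ψ.2, hφ, hψ⟩

lemma exists_isUnitVec_orthogonal_of_not_scalar {n : Type*} [Fintype n] [DecidableEq n]
    {X : Matrix n n ℂ} (hX : ∀ c : ℂ, X ≠ c • 1) :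
    ∃ ψ φ : n → ℂ, IsUnitVec ψ ∧ IsUnitVec φ ∧ star ψ ⬝ᵥ φ = 0 ∧
      ∀ Y : Matrix n n ℂ, Commute X Y → star ψ ⬝ᵥ (Y *ᵥ φ) = 0 := by
  cases isEmpty_or_nonempty n
  · exact absurd (Subsingleton.elim _ _) (hX 0)
  set f := toEuclideanLin X
  obtain ⟨μ, hμ⟩ := Module.End.exists_eigenvalue f
  have hinv : ∀ Y : Matrix n n ℂ, Commute X Y → ∀ v ∈ Module.End.eigenspace f μ,
      toEuclideanLin Y v ∈ Module.End.eigenspace f μ := by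
    intro Y hY v hv
    rw [Module.End.mem_eigenspace_iff] at hv ⊢
    rw [← map_smul, ← hv]
    simpa using congr(toEuclideanLin $(hY.eq) v)
  have hne_top : Module.End.eigenspace f μ ≠ ⊤ := by
    intro htop
    refine hX μ (toEuclideanLin.injective (LinearMap.ext fun v => ?_))
    have hv : f v = μ • v := Module.End.mem_eigenspace_iff.mp (htop ▸ Submodule.mem_top)
    simpa [f] using hv
  obtain ⟨φ, hφE, ψ, hψE, hφ, hψ⟩ := exists_norm_one_mem_and_mem_orthogonal hμ hne_top
  refine ⟨ψ.ofLp, φ.ofLp, isUnitVec_ofLp hψ, isUnitVec_ofLp hφ, ?_, fun Y hY => ?_⟩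
  · rw [star_ofLp_dotProduct_ofLp]
    exact Submodule.inner_left_of_mem_orthogonal hφE hψE
  · change star ψ.ofLp ⬝ᵥ (toEuclideanLin Y φ).ofLp = 0
    rw [star_ofLp_dotProduct_ofLp]
    exact Submodule.inner_left_of_mem_orthogonal (hinv Y hY φ hφE) hψE

theorem CScrambling.exists_eq_smul_one_of_commute {d p : ℕ} {Φ : Mat d →ₗ[ℂ] Mat d}
    (hΦ : CScrambling Φ) {K : Fin p → Mat d} (hK : ∀ X, Φ X = ∑ i, K i * X * (K i)ᴴ)
    (X : Mat d) (hX : ∀ Y ∈ krausOpSys K, X * Y = Y * X) : ∃ c : ℂ, X = c • 1 := by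
  by_contra! hscalar
  obtain ⟨ψ, φ, hψ, hφ, horth, hcomm⟩ := exists_isUnitVec_orthogonal_of_not_scalar hscalar
  refine (trace_map_pureState_mul_map_pureState_pos_iff hK ψ φ).mp (hΦ ψ φ hψ hφ horth) ?_
  intro Y hY
  rw [traceForm_apply, mul_vecMulVec, trace_vecMulVec, dotProduct_comm]
  exact hcomm Y (hX Y hY)

def krausMap {ι m n : Type*} [Fintype ι] [Fintype n] (L : ι → Matrix m n ℂ) :
    Matrix n n ℂ →ₗ[ℂ] Matrix m m ℂ where
  toFun X := ∑ i, L i * X * (L i)ᴴ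
  map_add' X Y := by simp only [Matrix.mul_add, Matrix.add_mul, Finset.sum_add_distrib]
  map_smul' c X := by
    simp only [Matrix.mul_smul, Matrix.smul_mul, Finset.smul_sum, RingHom.id_apply]

lemma isChannel_krausMap {q m n : ℕ} {L : Fin q → Matrix (Fin n) (Fin m) ℂ}
    (hL : ∑ i, (L i)ᴴ * L i = 1) : IsChannel (krausMap L) :=
  ⟨q, L, fun _ => rfl, hL⟩

def statePrep {n : ℕ} (v : Fin n → ℂ) : Matrix (Fin 1) (Fin 1) ℂ →ₗ[ℂ] Mat n :=
  krausMap fun _ : Fin 1 => replicateCol (Fin 1) v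

lemma statePrep_apply {n : ℕ} (v : Fin n → ℂ) (X : Matrix (Fin 1) (Fin 1) ℂ) :
    statePrep v X = X 0 0 • pureState v := by
  ext a b
  simp [statePrep, krausMap, pureState, mul_apply]
  ring

lemma isChannel_statePrep {n : ℕ} {v : Fin n → ℂ} (hv : IsUnitVec v) :
    IsChannel (statePrep v) := by
  refine isChannel_krausMap ?_
  ext a b
  obtain rfl := Subsingleton.elim a b
  simp only [conjTranspose_replicateCol, replicateRow_mul_replicateCol, Fin.sum_univ_one, of_apply,
    one_apply_eq]
  exact hv

lemma tensorId_statePrep_pureState {m n : ℕ} (Φ : Mat m →ₗ[ℂ] Mat n) (v : Fin m → ℂ) :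
    tensorId (Φ ∘ₗ statePrep v) (pureState fun _ : Fin 1 × Fin 1 => 1) =
      (Φ (pureState v)).submatrix Prod.fst Prod.fst := by
  ext p q
  simp [tensorId, statePrep_apply, pureState]

theorem VanishingC0E.cScrambling {n : ℕ} {Φ : Mat n →ₗ[ℂ] Mat n} (h : VanishingC0E Φ) :
    CScrambling Φ := by
  intro ψ φ hψ hφ _
  have := h 1 1 one_pos one_pos (fun _ => 1) (by simp [IsUnitVec]) _ _
    (isChannel_statePrep hψ) (isChannel_statePrep hφ)
  rw [tensorId_statePrep_pureState, tensorId_statePrep_pureState] at this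
  simpa [trace, mul_apply, Fintype.sum_prod_type] using this

lemma comp_apply_eq_sum_kraus {ι κ l m n : Type*} [Fintype ι] [Fintype κ] [Fintype m] [Fintype n]
    {Φ : Matrix m m ℂ →ₗ[ℂ] Matrix l l ℂ} {E : Matrix n n ℂ →ₗ[ℂ] Matrix m m ℂ}
    {K : ι → Matrix l m ℂ} {L : κ → Matrix m n ℂ} (hΦ : ∀ X, Φ X = ∑ i, K i * X * (K i)ᴴ)
    (hE : ∀ X, E X = ∑ a, L a * X * (L a)ᴴ) (X : Matrix n n ℂ) :
    (Φ ∘ₗ E) X = ∑ c : ι × κ, K c.1 * L c.2 * X * (K c.1 * L c.2)ᴴ := by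
  simp only [LinearMap.comp_apply, hΦ, hE, Fintype.sum_prod_type, Matrix.mul_sum, Matrix.sum_mul,
    conjTranspose_mul, Matrix.mul_assoc]

lemma star_uncurry_dotProduct_uncurry {m n : Type*} [Fintype m] [Fintype n] (A B : Matrix m n ℂ) :
    star (Function.uncurry A) ⬝ᵥ Function.uncurry B = (Aᴴ * B).trace := by
  simp only [dotProduct, Fintype.sum_prod_type, trace, diag, mul_apply]
  exact Finset.sum_comm

lemma tensorId_pureState_eq_sum {d₀ n d₁ : ℕ} {γ : Type*} [Fintype γ]
    {Θ : Matrix (Fin d₀) (Fin d₀) ℂ →ₗ[ℂ] Mat n} {N : γ → Matrix (Fin n) (Fin d₀) ℂ}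
    (hΘ : ∀ X, Θ X = ∑ c, N c * X * (N c)ᴴ) (ψ : Fin d₀ × Fin d₁ → ℂ) :
    tensorId Θ (pureState ψ) =
      ∑ c, pureState (Function.uncurry (N c * of (Function.curry ψ))) := by
  ext p q
  simp only [tensorId, of_apply, hΘ, Matrix.sum_apply, pureState, mul_apply,
    conjTranspose_apply, Function.uncurry, Function.curry, star_sum, star_mul', Finset.sum_mul,
    Finset.mul_sum]
  refine Finset.sum_congr rfl fun c _ => Finset.sum_congr rfl fun l _ => ?_
  refine Finset.sum_congr rfl fun k _ => ?_
  ring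

theorem vanishingC0E_of_traceForm_orthogonal_eq_bot {d p : ℕ} {Φ : Mat d →ₗ[ℂ] Mat d}
    {K : Fin p → Mat d} (hK : ∀ X, Φ X = ∑ i, K i * X * (K i)ᴴ)
    (horth : (traceForm ℂ (Fin d)).orthogonal (krausOpSys K) = ⊥) : VanishingC0E Φ := by
  rintro d₀ d₁ - - ψ hψ E₁ E₂ ⟨q₁, L, hL, hLtp⟩ ⟨q₂, M, hM, hMtp⟩
  rw [tensorId_pureState_eq_sum (comp_apply_eq_sum_kraus hK hL),
    tensorId_pureState_eq_sum (comp_apply_eq_sum_kraus hK hM),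
    trace_sum_pureState_mul_sum_pureState_pos_iff]
  by_contra! h
  set Ψ : Matrix (Fin d₀) (Fin d₁) ℂ := of (Function.curry ψ)
  have hZ : ∀ a b, M b * Ψ * Ψᴴ * (L a)ᴴ = 0 := by
    intro a b
    rw [← Submodule.mem_bot ℂ, ← horth, mem_traceForm_orthogonal_krausOpSys_iff]
    intro i j
    have hij := h (i, a) (j, b)
    rw [star_uncurry_dotProduct_uncurry] at hij
    calc _ = (Ψᴴ * (L a)ᴴ * ((K i)ᴴ * K j * M b * Ψ)).trace := by
          rw [trace_mul_comm (Ψᴴ * (L a)ᴴ)]; simp only [Matrix.mul_assoc]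
      _ = 0 := by simpa only [conjTranspose_mul, Matrix.mul_assoc] using hij
  have hΨ : Ψ * Ψᴴ = 0 := calc
    Ψ * Ψᴴ = (∑ b, (M b)ᴴ * M b) * (Ψ * Ψᴴ) * ∑ a, (L a)ᴴ * L a := by
      rw [hMtp, hLtp, Matrix.one_mul, Matrix.mul_one]
    _ = ∑ a, ∑ b, (M b)ᴴ * (M b * Ψ * Ψᴴ * (L a)ᴴ) * L a := by
      simp only [Finset.sum_mul, Finset.mul_sum, Matrix.mul_assoc]
    _ = 0 := by simp [hZ]
  have hnorm : (Ψᴴ * Ψ).trace = 1 := by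
    rw [← star_uncurry_dotProduct_uncurry]
    exact hψ
  rw [trace_mul_comm, hΨ, trace_zero] at hnorm
  exact zero_ne_one hnorm

/-- For a channel whose operator system `S_Φ` is closed under matrix
multiplication, vanishing of the one-shot zero-error entanglement-assisted classical
capacity, c-scrambling, and triviality of the commutant of `S_Φ` are all equivalent. -/
theorem algebra_opSys_scrambling_tfae (d p : ℕ) (K : Fin p → Mat d)
    (Φ : Module.End ℂ (Mat d))
    (hK : ∀ X, Φ X = ∑ i, K i * X * (K i)ᴴ) (hTP : ∑ i, (K i)ᴴ * K i = 1)
    (S : Submodule ℂ (Mat d))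
    (hS : S = Submodule.span ℂ {X : Mat d | ∃ i j : Fin p, X = (K i)ᴴ * K j})
    (halg : ∀ X ∈ S, ∀ Y ∈ S, X * Y ∈ S) :
    (VanishingC0E Φ ↔ CScrambling Φ) ∧
    (CScrambling Φ ↔
      ∀ X : Mat d, (∀ Y ∈ S, X * Y = Y * X) ↔ ∃ c : ℂ, X = c • (1 : Mat d)) := by
  replace hS : S = krausOpSys K := hS
  subst hS
  have h12 : VanishingC0E Φ → CScrambling Φ := VanishingC0E.cScrambling
  have h23 : CScrambling Φ →
      ∀ X : Mat d, (∀ Y ∈ krausOpSys K, X * Y = Y * X) → ∃ c : ℂ, X = c • 1 :=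
    fun h => h.exists_eq_smul_one_of_commute hK
  have h31 : (∀ X : Mat d, (∀ Y ∈ krausOpSys K, X * Y = Y * X) → ∃ c : ℂ, X = c • 1) →
      VanishingC0E Φ := fun h =>
    vanishingC0E_of_traceForm_orthogonal_eq_bot hK <| traceForm_orthogonal_eq_bot_of_commutant
      (one_mem_krausOpSys hTP) (fun _ => conjTranspose_mem_krausOpSys) halg h
  refine ⟨⟨h12, h31 ∘ h23⟩, fun h X => ⟨h23 h X, ?_⟩, fun h => h12 (h31 fun X => (h X).mp)⟩
  rintro ⟨c, rfl⟩ Y -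
  simp
end

section
/- Let A ∈ M_d(ℝ) be column stochastic. (i) For any CDUC channel Φ_{A,B} on M_d(ℂ): Φ_{A,B} is strictly positive if and only if A is entrywise strictly positive. (ii) For any DUC channel Φ_{A,C} on M_d(ℂ): Φ_{A,C} is strictly positive if and only if A is entrywise strictly positive. -/
open Matrix Filter
open scoped ComplexOrder

/-!
On a basis state `|j⟩⟨j|` both channels act as the classical channel of `A` and return
`diag(A · j)`, so strict positivity forces `A > 0`. Conversely let `A > 0` and `ρ` be a state,
with `ρ k k > 0` for some `k`. Then `Φ_{A,B}(ρ) = B ⊙ ρ + D`, where `B ⊙ ρ` is positive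
semidefinite by the Schur product theorem, `(B ⊙ ρ) k k = A k k ρ k k > 0`, and the diagonal
`D i i = ∑_{l ≠ i} A i l ρ l l` is positive for `i ≠ k`. For `Φ_{A,C}(ρ)` the bound
`|C i j ρ j i|² ≤ (A i j ρ j j) (A j i ρ i i)` makes the matrix diagonally dominant with weights
`A i j ρ j j`, with slack `A i i ρ i i` in row `i`.
-/

open Finset

theorem le_add_div_two_of_sq_le_mul {a b c : ℝ} (ha : 0 ≤ a) (hb : 0 ≤ b)
    (h : c ^ 2 ≤ a * b) : c ≤ (a + b) / 2 := by
  nlinarith [sq_nonneg (a - b), sq_nonneg (c - (a + b) / 2)]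

section QuadraticForms

variable {n 𝕜 : Type*} [RCLike 𝕜]

theorem Matrix.PosSemidef.norm_apply_sq_le {M : Matrix n n 𝕜} (hM : M.PosSemidef) (i j : n) :
    ‖M i j‖ ^ 2 ≤ RCLike.re (M i i) * RCLike.re (M j j) := by
  have hdet := (hM.submatrix ![i, j]).det_nonneg
  rw [det_fin_two] at hdet
  simp only [submatrix_apply, Matrix.cons_val_zero, Matrix.cons_val_one] at hdet
  rw [← hM.isHermitian.apply i j, RCLike.star_def, RCLike.conj_mul,
    ← hM.isHermitian.coe_re_apply_self i, ← hM.isHermitian.coe_re_apply_self j,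
    sub_nonneg] at hdet
  rw [← hM.isHermitian.apply i j, norm_star]
  exact_mod_cast hdet

variable [Fintype n]

theorem Matrix.re_star_dotProduct_mulVec (M : Matrix n n 𝕜) (x : n → 𝕜) :
    RCLike.re (star x ⬝ᵥ M *ᵥ x) = ∑ i, ∑ j, RCLike.re (star (x i) * M i j * x j) := by
  simp [dotProduct, mulVec, Finset.mul_sum, mul_assoc]

variable [DecidableEq n]

theorem Matrix.PosSemidef.posDef_add_diagonal {P : Matrix n n 𝕜} (hP : P.PosSemidef)
    {δ : n → 𝕜} (hδ : 0 ≤ δ) {k : n} (hk : 0 < P k k) (hδk : ∀ i, i ≠ k → 0 < δ i) :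
    (P + diagonal δ).PosDef := by
  refine .of_dotProduct_mulVec_pos (hP.add (.diagonal hδ)).isHermitian fun x hx => ?_
  have hquad : star x ⬝ᵥ diagonal δ *ᵥ x = ∑ i, star (x i) * δ i * x i := by
    simp [dotProduct, mulVec_diagonal, mul_assoc]
  have hterm : ∀ i, 0 ≤ star (x i) * δ i * x i := fun i => star_left_conjugate_nonneg (hδ i) _
  rw [add_mulVec, dotProduct_add, hquad]
  by_cases hsupp : ∃ i, i ≠ k ∧ x i ≠ 0
  · obtain ⟨i, hik, hxi⟩ := hsupp
    refine add_pos_of_nonneg_of_pos (hP.dotProduct_mulVec_nonneg x) ?_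
    exact Finset.sum_pos' (fun i _ => hterm i)
      ⟨i, mem_univ i, star_left_conjugate_pos (hδk i hik) (.of_ne_zero hxi)⟩
  · push Not at hsupp
    have hx_eq : x = Pi.single k (x k) := by
      ext i
      rcases eq_or_ne i k with rfl | hik
      · simp
      · simp [hik, hsupp i hik]
    have hxk : x k ≠ 0 := fun h => hx (by rw [hx_eq, h, Pi.single_zero])
    refine add_pos_of_pos_of_nonneg ?_ (Finset.sum_nonneg fun i _ => hterm i)
    rw [hx_eq, ← Pi.single_star, single_dotProduct, mulVec_single]
    simpa [mul_assoc, mul_left_comm] using star_left_conjugate_pos hk (.of_ne_zero hxk)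

/-- Weighted diagonal dominance: row `i` pays the weights `w i j` out of `M i i`, and by AM-GM
these pay for the off-diagonal entries. -/
theorem Matrix.IsHermitian.posDef_of_norm_sq_le_mul {M : Matrix n n 𝕜} (hM : M.IsHermitian)
    {w : n → n → ℝ} (hw : ∀ i j, 0 ≤ w i j)
    (hoff : ∀ i j, i ≠ j → ‖M i j‖ ^ 2 ≤ w i j * w j i)
    (hdiag : ∀ i, ∑ j ∈ univ.erase i, w i j < RCLike.re (M i i)) : M.PosDef := by
  refine .of_dotProduct_mulVec_pos hM fun x hx => ?_
  obtain ⟨k, hk⟩ : ∃ k, x k ≠ 0 := Function.ne_iff.mp hx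
  have hterm : ∀ i j, (if i = j then (RCLike.re (M i i) + w i i) * ‖x i‖ ^ 2 else 0)
      - (w i j * ‖x i‖ ^ 2 + w j i * ‖x j‖ ^ 2) / 2 ≤ RCLike.re (star (x i) * M i j * x j) := by
    intro i j
    rcases eq_or_ne i j with rfl | hij
    · rw [if_pos rfl, mul_right_comm, RCLike.star_def, RCLike.conj_mul, ← RCLike.ofReal_pow,
        RCLike.re_ofReal_mul]
      ring_nf
      exact le_rfl
    · rw [if_neg hij, zero_sub, neg_le]
      refine ((neg_le_abs _).trans (RCLike.abs_re_le_norm _)).trans ?_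
      refine le_add_div_two_of_sq_le_mul (mul_nonneg (hw i j) (by positivity))
        (mul_nonneg (hw j i) (by positivity)) ?_
      rw [norm_mul, norm_mul, norm_star]
      calc (‖x i‖ * ‖M i j‖ * ‖x j‖) ^ 2 = ‖M i j‖ ^ 2 * (‖x i‖ ^ 2 * ‖x j‖ ^ 2) := by ring
        _ ≤ (w i j * w j i) * (‖x i‖ ^ 2 * ‖x j‖ ^ 2) := by gcongr; exact hoff i j hij
        _ = _ := by ring
  have hsum : ∑ i, ∑ j, ((if i = j then (RCLike.re (M i i) + w i i) * ‖x i‖ ^ 2 else 0)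
      - (w i j * ‖x i‖ ^ 2 + w j i * ‖x j‖ ^ 2) / 2)
      = ∑ i, (RCLike.re (M i i) - ∑ j ∈ univ.erase i, w i j) * ‖x i‖ ^ 2 := by
    simp only [Finset.sum_sub_distrib, Finset.sum_ite_eq, Finset.mem_univ, if_true,
      ← Finset.sum_div, Finset.sum_add_distrib]
    rw [Finset.sum_comm (f := fun i j => w j i * ‖x j‖ ^ 2)]
    simp only [Finset.sum_erase_eq_sub (mem_univ _), sub_mul, add_mul, Finset.sum_mul,
      Finset.sum_sub_distrib, Finset.sum_add_distrib]
    ring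
  have hpos : 0 < ∑ i, (RCLike.re (M i i) - ∑ j ∈ univ.erase i, w i j) * ‖x i‖ ^ 2 :=
    Finset.sum_pos' (fun i _ => mul_nonneg (sub_pos.2 (hdiag i)).le (by positivity))
      ⟨k, mem_univ k, mul_pos (sub_pos.2 (hdiag k)) (by positivity)⟩
  rw [RCLike.pos_iff, re_star_dotProduct_mulVec]
  refine ⟨hpos.trans_le ?_, hM.im_star_dotProduct_mulVec_self x⟩
  exact hsum ▸ Finset.sum_le_sum fun i _ => Finset.sum_le_sum fun j _ => hterm i j

end QuadraticForms

theorem IsState.exists_diag_pos {d : ℕ} {ρ : Mat d} (hρ : IsState ρ) : ∃ k, 0 < ρ k k := by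
  have htrace : ρ.trace ≠ 0 := hρ.2 ▸ one_ne_zero
  obtain ⟨k, -, hk⟩ := Finset.exists_ne_zero_of_sum_ne_zero htrace
  exact ⟨k, hρ.1.diag_nonneg.lt_of_ne' hk⟩

theorem isState_single_self {d : ℕ} (j : Fin d) : IsState (single j j (1 : ℂ)) := by
  rw [← diagonal_single]
  refine ⟨.diagonal fun i => ?_, by simp [trace_diagonal]⟩
  rcases eq_or_ne i j with rfl | hij <;> simp [*]

section Channels

variable {d : ℕ} {A : Matrix (Fin d) (Fin d) ℝ}

theorem cducMap_single_self (B : Mat d) (j : Fin d) :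
    cducMap A B (single j j 1) = diagonal fun i => (A i j : ℂ) := by
  ext i k
  rcases eq_or_ne i k with rfl | hik
  · simp [cducMap, single_apply]
  · simp [cducMap, single_apply, hik]
    grind

theorem ducMap_single_self (C : Mat d) (j : Fin d) :
    ducMap A C (single j j 1) = diagonal fun i => (A i j : ℂ) := by
  ext i k
  rcases eq_or_ne i k with rfl | hik
  · simp [ducMap, single_apply]
  · simp [ducMap, single_apply, hik]
    grind

theorem matStrictlyPositive_of_map_single_self {Φ : Mat d →ₗ[ℂ] Mat d}
    (hΦ : ∀ j, Φ (single j j 1) = diagonal fun i => (A i j : ℂ)) (h : StrictlyPositive Φ) :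
    MatStrictlyPositive A := fun i j => by
  simpa [hΦ j, Complex.zero_lt_real] using (h _ (isState_single_self j)).diag_pos (i := i)

theorem cducMap_eq_hadamard_add_diagonal {B : Mat d} (hBA : ∀ i, B i i = (A i i : ℂ))
    (X : Mat d) :
    cducMap A B X = B ⊙ X + diagonal fun i => ∑ k ∈ univ.erase i, (A i k : ℂ) * X k k := by
  ext i j
  rcases eq_or_ne i j with rfl | hij
  · simp [cducMap, hBA]
  · simp [cducMap, hij]

theorem strictlyPositive_cducMap (hA : MatStrictlyPositive A) {B : Mat d} (hB : B.PosSemidef)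
    (hBA : ∀ i, B i i = (A i i : ℂ)) : StrictlyPositive (cducMap A B) := fun ρ hρ => by
  obtain ⟨k, hk⟩ := hρ.exists_diag_pos
  have hAρ : ∀ i l, 0 ≤ (A i l : ℂ) * ρ l l := fun i l =>
    mul_nonneg (Complex.zero_le_real.2 (hA i l).le) hρ.1.diag_nonneg
  rw [cducMap_eq_hadamard_add_diagonal hBA]
  refine (hB.hadamard hρ.1).posDef_add_diagonal (k := k)
    (fun i => Finset.sum_nonneg fun l _ => hAρ i l) ?_ fun i hik => ?_
  · rw [hadamard_apply, hBA]
    exact mul_pos (Complex.zero_lt_real.2 (hA k k)) hk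
  · exact Finset.sum_pos' (fun l _ => hAρ i l) ⟨k, mem_erase.2 ⟨hik.symm, mem_univ k⟩,
      mul_pos (Complex.zero_lt_real.2 (hA i k)) hk⟩

theorem ducMap_isHermitian {C X : Mat d} (hC : C.IsHermitian) (hX : X.IsHermitian) :
    (ducMap A C X).IsHermitian := by
  ext i j
  rcases eq_or_ne i j with rfl | hij
  · simp [ducMap, hX.apply]
  · simp [ducMap, hij, Ne.symm hij, ← hC.apply i j, ← hX.apply j i]

theorem strictlyPositive_ducMap (hA : MatStrictlyPositive A) {C : Mat d} (hC : C.IsHermitian)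
    (hCA : ∀ i j, i ≠ j → Complex.normSq (C i j) ≤ A i j * A j i) :
    StrictlyPositive (ducMap A C) := fun ρ hρ => by
  set r : Fin d → ℝ := fun i => (ρ i i).re
  have hr : ∀ i, 0 ≤ r i := fun i => (Complex.nonneg_iff.1 hρ.1.diag_nonneg).1
  obtain ⟨k, hk⟩ : ∃ k, 0 < r k := hρ.exists_diag_pos.imp fun k hk => (Complex.pos_iff.1 hk).1
  have hdiag : ∀ i, (ducMap A C ρ i i).re = ∑ l, A i l * r l := fun i => by
    simp [ducMap, r, Complex.re_sum]
  -- A row of `ρ` with vanishing diagonal entry vanishes, so it needs no weight; this leaves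
  -- slack in every diagonal entry of `ducMap A C ρ`.
  refine (ducMap_isHermitian hC hρ.1.1).posDef_of_norm_sq_le_mul
    (w := fun i j => if r i = 0 then 0 else A i j * r j) (fun i j => ?_) (fun i j hij => ?_)
    (fun i => ?_)
  · split_ifs
    exacts [le_rfl, mul_nonneg (hA i j).le (hr j)]
  · calc ‖ducMap A C ρ i j‖ ^ 2 = Complex.normSq (C i j) * ‖ρ j i‖ ^ 2 := by
          simp [ducMap, hij, mul_pow, Complex.normSq_eq_norm_sq]
      _ ≤ (A i j * A j i) * (r j * r i) :=
          mul_le_mul (hCA i j hij) (hρ.1.norm_apply_sq_le j i) (by positivity)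
            (mul_nonneg (hA i j).le (hA j i).le)
      _ ≤ _ := by split_ifs <;> simp_all [mul_mul_mul_comm, mul_comm]
  · rw [RCLike.re_to_complex, hdiag]
    split_ifs with hri
    · rw [Finset.sum_const_zero]
      exact Finset.sum_pos' (fun l _ => mul_nonneg (hA i l).le (hr l))
        ⟨k, mem_univ k, mul_pos (hA i k) hk⟩
    · rw [← Finset.add_sum_erase _ _ (mem_univ i), lt_add_iff_pos_left]
      exact mul_pos (hA i i) ((hr i).lt_of_ne' hri)

end Channels

theorem duc_strictly_positive_iff_general (d : ℕ) (A : Matrix (Fin d) (Fin d) ℝ) :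
    (∀ B : Mat d, B.PosSemidef → (∀ i, B i i = (A i i : ℂ)) →
      (StrictlyPositive (cducMap A B) ↔ MatStrictlyPositive A)) ∧
    (∀ C : Mat d, C.IsHermitian →
      (∀ i j, i ≠ j → Complex.normSq (C i j) ≤ A i j * A j i) →
      (StrictlyPositive (ducMap A C) ↔ MatStrictlyPositive A)) :=
  ⟨fun B hB hBA => ⟨matStrictlyPositive_of_map_single_self (cducMap_single_self B),
      fun hA => strictlyPositive_cducMap hA hB hBA⟩,
    fun C hC hCA => ⟨matStrictlyPositive_of_map_single_self (ducMap_single_self C),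
      fun hA => strictlyPositive_ducMap hA hC hCA⟩⟩

/-- A CDUC channel `Φ_{A,B}` (resp. DUC channel `Φ_{A,C}`) is strictly
positive if and only if `A` is entrywise strictly positive. -/
theorem duc_strictly_positive_iff (d : ℕ) (A : Matrix (Fin d) (Fin d) ℝ)
    (hA : ColumnStochastic A) :
    (∀ B : Mat d, B.PosSemidef → (∀ i, B i i = (A i i : ℂ)) →
      (StrictlyPositive (cducMap A B) ↔ MatStrictlyPositive A)) ∧
    (∀ C : Mat d, C.IsHermitian →
      (∀ i j, i ≠ j → Complex.normSq (C i j) ≤ A i j * A j i) →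
      (StrictlyPositive (ducMap A C) ↔ MatStrictlyPositive A)) :=
  duc_strictly_positive_iff_general d A
end

section
/- Let A ∈ M_d(ℝ) be column stochastic. (i) For any CDUC channel Φ_{A,B} on M_d(ℂ): Φ_{A,B} is mixing if and only if A is mixing. (ii) For any DUC channel Φ_{A,C} on M_d(ℂ): Φ_{A,C} is mixing if and only if A is mixing. -/
open Matrix Filter
open scoped ComplexOrder

/-!
Both channels act on diagonals as `A` acts on vectors, `diag (Φ X) = A (diag X)`, while each
off-diagonal entry is multiplied by `B i j` (resp. swapped with its mirror entry and multiplied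
by `C i j`). So `Φ` is mixing iff `A ^ n v → (∑ v) • π` for a probability vector `π` and the
off-diagonal entries of `Φ ^ n X` tend to `0`. For a column-stochastic `A` the first condition
is equivalent to `A` being mixing: in the generalized eigenspace decomposition of `A`, the
eigenvalue `1` is simple and semisimple and all others lie in the open unit disc, where the
nilpotent parts only contribute polynomially growing factors. The second condition follows:
positivity of `B` and `B i i = A i i ≤ 1` (resp. `|C i j|² ≤ A i j A j i ≤ 1`) give
`|B i j| ≤ 1`, with equality only if `i` and `j` are both absorbing states (resp. `A` swaps
`i` and `j`), which a mixing `A` excludes.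
-/

open Module Module.End Finset Topology

section GeneralizedEigenspaces

variable {R M : Type*} [CommRing R] [AddCommGroup M] [Module R M]

theorem Module.End.pow_apply_eq_sum_of_pow_sub_smul_apply_eq_zero (f : End R M) (μ : R)
    {k n : ℕ} {x : M} (hx : ((f - μ • 1) ^ k) x = 0) (hkn : k ≤ n) :
    (f ^ n) x = ∑ j ∈ range k, ((n.choose j : R) * μ ^ (n - j)) • ((f - μ • 1) ^ j) x := by
  set N := f - μ • 1
  calc (f ^ n) x = ((N + μ • 1) ^ n) x := by rw [sub_add_cancel]
    _ = ∑ j ∈ range (n + 1), ((n.choose j : R) * μ ^ (n - j)) • (N ^ j) x := by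
      rw [((Commute.one_right N).smul_right μ).add_pow, LinearMap.sum_apply]
      refine sum_congr rfl fun j _ => ?_
      simp only [smul_pow, one_pow, mul_apply, Module.End.natCast_apply, LinearMap.smul_apply,
        one_apply, map_smul, ← Nat.cast_smul_eq_nsmul R, smul_smul, mul_comm]
    _ = _ := (sum_subset (range_subset_range.2 (by omega)) fun j _ hj =>
      by rw [pow_map_zero_of_le (not_lt.1 (mem_range.not.1 hj)) hx, smul_zero]).symm

theorem Module.End.maxGenEigenspace_eq_eigenspace {f : End R M} {μ : R}
    (h : ∀ x, (f - μ • 1) ((f - μ • 1) x) = 0 → (f - μ • 1) x = 0) :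
    f.maxGenEigenspace μ = f.eigenspace μ := by
  have hpow : ∀ (k : ℕ) x, ((f - μ • 1) ^ k) x = 0 → (f - μ • 1) x = 0 := by
    intro k
    induction k with
    | zero => intro x hx; simp_all
    | succ k ih => exact fun x hx => h x (ih _ (by rwa [pow_succ, mul_apply] at hx))
  refine le_antisymm (fun x hx => ?_) eigenspace_le_maxGenEigenspace
  obtain ⟨k, hk⟩ := (f.mem_maxGenEigenspace μ x).1 hx
  rw [eigenspace_def]
  exact hpow k x hk

end GeneralizedEigenspaces

theorem tendsto_choose_mul_pow_sub_nhds_zero {𝕜 : Type*} [NormedField 𝕜] [CompleteSpace 𝕜]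
    {μ : 𝕜} (hμ : ‖μ‖ < 1) (j : ℕ) :
    Tendsto (fun n => (n.choose j : 𝕜) * μ ^ (n - j)) atTop (𝓝 0) := by
  rw [← tendsto_add_atTop_iff_nat j]
  simpa using (summable_choose_mul_geometric_of_norm_lt_one j hμ).tendsto_atTop_zero

section Normed

variable {𝕜 E : Type*} [NormedField 𝕜] [CompleteSpace 𝕜] [NormedAddCommGroup E]
  [NormedSpace 𝕜 E]

theorem Module.End.tendsto_pow_apply_of_mem_maxGenEigenspace {f : End 𝕜 E} {μ : 𝕜}
    (hμ : ‖μ‖ < 1) {x : E} (hx : x ∈ f.maxGenEigenspace μ) :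
    Tendsto (fun n => (f ^ n) x) atTop (𝓝 0) := by
  obtain ⟨k, hk⟩ := (f.mem_maxGenEigenspace μ x).1 hx
  have hlim := tendsto_finsetSum (range k) fun j _ =>
    (tendsto_choose_mul_pow_sub_nhds_zero hμ j).smul_const (((f - μ • 1) ^ j) x)
  simp only [zero_smul, sum_const_zero] at hlim
  exact hlim.congr' <| (eventually_ge_atTop k).mono fun n hn =>
    (f.pow_apply_eq_sum_of_pow_sub_smul_apply_eq_zero μ hk hn).symm

theorem Module.End.exists_tendsto_pow_apply_mem_eigenspace_one [IsAlgClosed 𝕜]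
    [FiniteDimensional 𝕜 E] {f : End 𝕜 E} (h1 : f.maxGenEigenspace 1 = f.eigenspace 1)
    (hlt : ∀ μ, f.HasEigenvalue μ → μ ≠ 1 → ‖μ‖ < 1) (x : E) :
    ∃ y ∈ f.eigenspace 1, Tendsto (fun n => (f ^ n) x) atTop (𝓝 y) := by
  have hx : x ∈ ⨆ μ, f.maxGenEigenspace μ := by rw [iSup_maxGenEigenspace_eq_top]; trivial
  refine Submodule.iSup_induction _ (motive := fun x => ∃ y ∈ f.eigenspace 1,
    Tendsto (fun n => (f ^ n) x) atTop (𝓝 y)) hx (fun μ x hx => ?_) ⟨0, zero_mem _, by simp⟩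
    fun x y ⟨a, ha, hxa⟩ ⟨b, hb, hyb⟩ => ⟨a + b, add_mem ha hb, by simpa using hxa.add hyb⟩
  by_cases hμ : μ = 1
  · subst hμ
    rw [h1] at hx
    have hfix : ∀ n, (f ^ n) x = x := fun n => by
      rw [pow_apply, Function.iterate_fixed (by simpa using mem_eigenspace_iff.1 hx)]
    exact ⟨x, hx, by simp only [hfix]; exact tendsto_const_nhds⟩
  by_cases hx0 : x = 0
  · exact ⟨0, zero_mem _, by simp [hx0]⟩
  have hev : f.HasEigenvalue μ :=
    HasUnifEigenvalue.lt zero_lt_one ((Submodule.ne_bot_iff _).2 ⟨x, hx, hx0⟩)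
  exact ⟨0, zero_mem _, tendsto_pow_apply_of_mem_maxGenEigenspace (hlt μ hev hμ) hx⟩

end Normed

theorem Matrix.isRoot_charpoly_iff_hasEigenvalue {K ι : Type*} [Field K] [Fintype ι]
    [DecidableEq ι] (M : Matrix ι ι K) (μ : K) :
    M.charpoly.IsRoot μ ↔ HasEigenvalue (toLin' M) μ := by
  rw [← charpoly_toLin', hasEigenvalue_iff_isRoot_charpoly]

theorem Matrix.rootMultiplicity_charpoly {K ι : Type*} [Field K] [Fintype ι]
    [DecidableEq ι] (M : Matrix ι ι K) (μ : K) :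
    M.charpoly.rootMultiplicity μ = finrank K (maxGenEigenspace (toLin' M) μ) := by
  rw [← charpoly_toLin', LinearMap.finrank_maxGenEigenspace_eq]

theorem Matrix.PosSemidef.normSq_apply_le {n : Type*} [Fintype n] [DecidableEq n]
    {B : Matrix n n ℂ} (hB : B.PosSemidef) (i j : n) :
    (Complex.normSq (B i j) : ℂ) ≤ B i i * B j j := by
  have hdet := (hB.submatrix ![i, j]).det_nonneg
  rw [det_fin_two] at hdet
  simp only [submatrix_apply, Matrix.cons_val_zero, Matrix.cons_val_one,
    ← hB.isHermitian.apply j i] at hdet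
  rw [← sub_nonneg, ← Complex.mul_conj]
  exact hdet

section MixesTo

variable {𝕜 ι : Type*} [NontriviallyNormedField 𝕜] [Fintype ι]

def MixesTo (f : End 𝕜 (ι → 𝕜)) (π : ι → 𝕜) : Prop :=
  ∀ v, Tendsto (fun n => (f ^ n) v) atTop (𝓝 ((∑ i, v i) • π))

variable {f : End 𝕜 (ι → 𝕜)} {π v : ι → 𝕜}

theorem MixesTo.eq_sum_smul_of_apply_eq_self (h : MixesTo f π) (hv : f v = v) :
    v = (∑ i, v i) • π := by
  refine tendsto_nhds_unique (tendsto_const_nhds.congr fun n => ?_) (h v)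
  rw [pow_apply, Function.iterate_fixed hv]

theorem MixesTo.apply_eq_self [CompleteSpace 𝕜] (h : MixesTo f π) (hπ : ∑ i, π i = 1) :
    f π = π := by
  have := h π
  rw [hπ, one_smul] at this
  exact isFixedPt_of_tendsto_iterate (by simpa only [pow_apply] using this)
    (LinearMap.continuous_of_finiteDimensional f).continuousAt

theorem MixesTo.eq_one_of_hasEigenvector (h : MixesTo f π) {μ : 𝕜} (hv : f.HasEigenvector μ v)
    (hμ : ‖μ‖ = 1) : μ = 1 := by
  set w := (∑ i, v i) • π
  have hlim : Tendsto (fun n => μ ^ n • v) atTop (𝓝 w) := by simpa only [hv.pow_apply] using h v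
  have hfix : μ • w = w := tendsto_nhds_unique (f := fun n => μ ^ (n + 1) • v)
    (by simpa only [smul_smul, ← pow_succ'] using hlim.const_smul μ)
    (hlim.comp (tendsto_add_atTop_nat 1))
  have hnorm : ‖w‖ = ‖v‖ := tendsto_nhds_unique hlim.norm (by simp [norm_smul, hμ])
  have hw : w ≠ 0 := norm_ne_zero_iff.1 (hnorm ▸ norm_ne_zero_iff.2 hv.2)
  have hsub : (μ - 1) • w = 0 := by rw [sub_smul, hfix, one_smul, sub_self]
  exact sub_eq_zero.1 ((smul_eq_zero.1 hsub).resolve_right hw)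

end MixesTo

section MarkovOp

variable {d : ℕ} {A : Matrix (Fin d) (Fin d) ℝ}

noncomputable def markovOp (A : Matrix (Fin d) (Fin d) ℝ) : End ℂ (Fin d → ℂ) :=
  toLin' (A.map Complex.ofReal)

theorem markovOp_apply (v : Fin d → ℂ) (i : Fin d) :
    markovOp A v i = ∑ j, (A i j : ℂ) * v j := rfl

theorem matMixing_iff : MatMixing A ↔ finrank ℂ ((markovOp A).maxGenEigenspace 1) = 1 ∧
    ∀ μ : ℂ, ‖μ‖ = 1 → (markovOp A).HasEigenvalue μ → μ = 1 := by
  rw [MatMixing, Matrix.rootMultiplicity_charpoly]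
  simp only [Matrix.isRoot_charpoly_iff_hasEigenvalue]
  rfl

end MarkovOp

namespace ColumnStochastic

variable {d : ℕ} {A : Matrix (Fin d) (Fin d) ℝ} (hA : ColumnStochastic A)
include hA

theorem le_one (i j : Fin d) : A i j ≤ 1 :=
  (single_le_sum (fun k _ => hA.1 k j) (mem_univ i)).trans_eq (hA.2 j)

theorem sum_markovOp_apply (v : Fin d → ℂ) : ∑ i, markovOp A v i = ∑ i, v i := by
  simp only [markovOp_apply]
  rw [sum_comm]
  refine sum_congr rfl fun j _ => ?_
  rw [← sum_mul, ← Complex.ofReal_sum, hA.2 j, Complex.ofReal_one, one_mul]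

theorem sum_markovOp_pow_apply (n : ℕ) (v : Fin d → ℂ) :
    ∑ i, (markovOp A ^ n) v i = ∑ i, v i := by
  induction n with
  | zero => rfl
  | succ n ih => rw [pow_succ', End.mul_apply, hA.sum_markovOp_apply, ih]

theorem markovOp_pow_nonneg (n : ℕ) {v : Fin d → ℂ} (hv : 0 ≤ v) : 0 ≤ (markovOp A ^ n) v := by
  induction n with
  | zero => exact hv
  | succ n ih =>
    rw [pow_succ', End.mul_apply]
    exact fun i => sum_nonneg fun j _ => mul_nonneg (Complex.zero_le_real.2 (hA.1 i j)) (ih j)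

theorem norm_le_one_of_hasEigenvalue {μ : ℂ} (hμ : (markovOp A).HasEigenvalue μ) : ‖μ‖ ≤ 1 := by
  obtain ⟨v, hv⟩ := hμ.exists_hasEigenvector
  have hpos : 0 < ∑ i, ‖v i‖ := by
    obtain ⟨i, hi⟩ := Function.ne_iff.1 hv.2
    exact sum_pos' (fun _ _ => norm_nonneg _) ⟨i, mem_univ i, norm_pos_iff.2 hi⟩
  refine le_of_mul_le_mul_right ?_ hpos
  calc ‖μ‖ * ∑ i, ‖v i‖ = ∑ i, ‖markovOp A v i‖ := by
        simp only [hv.apply_eq_smul, Pi.smul_apply, smul_eq_mul, norm_mul, mul_sum]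
    _ ≤ ∑ i, ∑ j, A i j * ‖v j‖ := sum_le_sum fun i _ => by
        rw [markovOp_apply]
        refine (norm_sum_le _ _).trans_eq (sum_congr rfl fun j _ => ?_)
        rw [norm_mul, Complex.norm_real, Real.norm_of_nonneg (hA.1 i j)]
    _ = 1 * ∑ j, ‖v j‖ := by
        rw [sum_comm, one_mul]
        exact sum_congr rfl fun j _ => by rw [← sum_mul, hA.2 j, one_mul]

theorem markovOp_single_of_eq_one {i j : Fin d} (h : A i j = 1) :
    markovOp A (Pi.single j 1) = Pi.single i 1 := by
  have hcol : ∀ k, k ≠ i → A k j = 0 := by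
    have hrest := hA.2 j
    rw [← add_sum_erase _ _ (mem_univ i), h, add_eq_left,
      sum_eq_zero_iff_of_nonneg fun k _ => hA.1 k j] at hrest
    exact fun k hk => hrest k (mem_erase.2 ⟨hk, mem_univ k⟩)
  ext k
  rw [markovOp_apply, sum_eq_single j (fun l _ hl => by simp [hl]) (by simp)]
  by_cases hk : k = i
  · simp [hk, h]
  · simp [hk, hcol k hk]

theorem matMixing_of_mixesTo {π : Fin d → ℂ} (hπ : ∑ i, π i = 1) (h : MixesTo (markovOp A) π) :
    MatMixing A := by
  set f := markovOp A
  have hπ0 : π ≠ 0 := by rintro rfl; simp at hπ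
  have heig : f.eigenspace 1 = ℂ ∙ π := by
    refine le_antisymm (fun v hv => ?_) ((Submodule.span_singleton_le_iff_mem _ _).2 ?_)
    · rw [h.eq_sum_smul_of_apply_eq_self (v := v) (by simpa using mem_eigenspace_iff.1 hv)]
      exact Submodule.smul_mem _ _ (Submodule.mem_span_singleton_self π)
    · simpa [mem_eigenspace_iff] using h.apply_eq_self hπ
  have hmax : f.maxGenEigenspace 1 = f.eigenspace 1 := by
    -- a fixed vector in the range of `f - 1` has sum `0`, so it vanishes
    refine maxGenEigenspace_eq_eigenspace fun x hx => ?_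
    have hsum : ∑ i, (f - (1 : ℂ) • 1) x i = 0 := by
      simp [Finset.sum_sub_distrib, hA.sum_markovOp_apply, f]
    rw [h.eq_sum_smul_of_apply_eq_self (v := (f - (1 : ℂ) • 1) x)
      (by simpa [sub_eq_zero] using hx), hsum, zero_smul]
  rw [matMixing_iff, hmax, heig, finrank_span_singleton hπ0]
  refine ⟨rfl, fun μ hμ hev => ?_⟩
  obtain ⟨v, hv⟩ := hev.exists_hasEigenvector
  exact h.eq_one_of_hasEigenvector hv hμ

theorem exists_mixesTo_of_matMixing (h : MatMixing A) :
    ∃ π, 0 ≤ π ∧ ∑ i, π i = 1 ∧ MixesTo (markovOp A) π := by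
  set f := markovOp A
  obtain ⟨hrank, hunit⟩ := matMixing_iff.1 h
  have hev : f.HasEigenvalue 1 := HasUnifEigenvalue.lt zero_lt_one
    (Submodule.one_le_finrank_iff.1 hrank.ge)
  have heig : f.maxGenEigenspace 1 = f.eigenspace 1 :=
    (Submodule.eq_of_le_of_finrank_le eigenspace_le_maxGenEigenspace
      (hrank.trans_le (Submodule.one_le_finrank_iff.2 hev))).symm
  have hlt : ∀ μ, f.HasEigenvalue μ → μ ≠ 1 → ‖μ‖ < 1 := fun μ hμ hne =>
    (hA.norm_le_one_of_hasEigenvalue hμ).lt_of_ne fun h1 => hne (hunit μ h1 hμ)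
  choose L hL hlim using f.exists_tendsto_pow_apply_mem_eigenspace_one heig hlt
  have hsum : ∀ v, ∑ i, L v i = ∑ i, v i := fun v => tendsto_nhds_unique
    ((continuous_finsetSum _ fun i _ => continuous_apply i).tendsto _ |>.comp (hlim v))
    (tendsto_const_nhds.congr fun n => (hA.sum_markovOp_pow_apply n v).symm)
  obtain ⟨i₀⟩ : Nonempty (Fin d) := by
    obtain ⟨v, -, hv⟩ := (Submodule.ne_bot_iff _).1 hev
    exact ⟨(Function.ne_iff.1 hv).choose⟩
  set π := L (Pi.single i₀ 1)
  have hπ : ∑ i, π i = 1 := by simp [π, hsum]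
  have hspan : f.eigenspace 1 = ℂ ∙ π := eq_span_singleton_of_mem_of_finrank_eq_one
    (heig ▸ hrank) (hL _) (by rintro h0; simp [h0] at hπ)
  refine ⟨π, ge_of_tendsto' (hlim _) fun n => hA.markovOp_pow_nonneg n ?_, hπ, fun v => ?_⟩
  · exact Pi.single_nonneg.2 zero_le_one
  obtain ⟨c, hc⟩ := Submodule.mem_span_singleton.1 (hspan ▸ hL v)
  have hc' : c = ∑ i, v i := by
    rw [← hsum, ← hc]; simp [← mul_sum, hπ]
  rw [← hc', hc]
  exact hlim v

theorem eq_of_apply_self_eq_one (h : MatMixing A) {i j : Fin d} (hi : A i i = 1)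
    (hj : A j j = 1) : i = j := by
  obtain ⟨π, -, -, hπ⟩ := hA.exists_mixesTo_of_matMixing h
  have hsingle : ∀ k, A k k = 1 → Pi.single k 1 = π := fun k hk => by
    simpa using hπ.eq_sum_smul_of_apply_eq_self (hA.markovOp_single_of_eq_one hk)
  by_contra hij
  simpa [hij] using congr_fun ((hsingle i hi).trans (hsingle j hj).symm) i

theorem eq_of_apply_eq_one_of_apply_eq_one (h : MatMixing A) {i j : Fin d} (hij : A i j = 1)
    (hji : A j i = 1) : i = j := by
  by_contra hne
  set v : Fin d → ℂ := Pi.single i 1 - Pi.single j 1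
  have hv : (markovOp A).HasEigenvector (-1) v := by
    refine ⟨mem_eigenspace_iff.2 ?_, sub_ne_zero.2 fun h => ?_⟩
    · simp [v, hA.markovOp_single_of_eq_one hij, hA.markovOp_single_of_eq_one hji]
    · simpa [hne] using congr_fun h i
  have := (matMixing_iff.1 h).2 (-1) (by simp) (hasEigenvalue_of_hasEigenvector hv)
  norm_num at this

theorem norm_lt_one_of_posSemidef (h : MatMixing A) {B : Mat d} (hB : B.PosSemidef)
    (hBA : ∀ i, B i i = (A i i : ℂ)) {i j : Fin d} (hij : i ≠ j) : ‖B i j‖ < 1 := by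
  by_contra! hge
  have hle := hB.normSq_apply_le i j
  rw [hBA, hBA, ← Complex.ofReal_mul, Complex.real_le_real, Complex.normSq_eq_norm_sq] at hle
  have := hA.le_one i i; have := hA.le_one j j; have := hA.1 i i; have := hA.1 j j
  exact hij (hA.eq_of_apply_self_eq_one h (by nlinarith) (by nlinarith))

theorem norm_lt_one_of_normSq_le (h : MatMixing A) {C : Mat d} {i j : Fin d} (hij : i ≠ j)
    (hC : Complex.normSq (C i j) ≤ A i j * A j i) : ‖C i j‖ < 1 := by
  by_contra! hge
  rw [Complex.normSq_eq_norm_sq] at hC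
  have := hA.le_one i j; have := hA.le_one j i; have := hA.1 i j; have := hA.1 j i
  exact hij (hA.eq_of_apply_eq_one_of_apply_eq_one h (by nlinarith) (by nlinarith))

end ColumnStochastic

section Channels

variable {d : ℕ} {A : Matrix (Fin d) (Fin d) ℝ}

theorem diagLinearMap_comp_cducMap (B : Mat d) :
    diagLinearMap (Fin d) ℂ ℂ ∘ₗ cducMap A B = markovOp A ∘ₗ diagLinearMap (Fin d) ℂ ℂ :=
  LinearMap.ext fun X => funext fun i => by simp [cducMap, markovOp_apply]

theorem diagLinearMap_comp_ducMap (C : Mat d) :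
    diagLinearMap (Fin d) ℂ ℂ ∘ₗ ducMap A C = markovOp A ∘ₗ diagLinearMap (Fin d) ℂ ℂ :=
  LinearMap.ext fun X => funext fun i => by simp [ducMap, markovOp_apply]

theorem cducMap_pow_apply_of_ne (B : Mat d) {i j : Fin d} (hij : i ≠ j) (n : ℕ) (X : Mat d) :
    (cducMap A B ^ n) X i j = B i j ^ n * X i j := by
  induction n with
  | zero => simp
  | succ n ih =>
    rw [pow_succ', End.mul_apply, show ∀ Y : Mat d, cducMap A B Y i j = B i j * Y i j from
      fun Y => if_neg hij, ih, pow_succ', mul_assoc]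

theorem ducMap_pow_apply_norm_le {C : Mat d} (hC : C.IsHermitian) {i j : Fin d} (hij : i ≠ j)
    (n : ℕ) (X : Mat d) : max ‖(ducMap A C ^ n) X i j‖ ‖(ducMap A C ^ n) X j i‖ ≤
      ‖C i j‖ ^ n * max ‖X i j‖ ‖X j i‖ := by
  induction n with
  | zero => simp
  | succ n ih =>
    have hCji : ‖C j i‖ = ‖C i j‖ := by rw [← hC.apply i j, norm_star]
    have hij' : ∀ Y : Mat d, ducMap A C Y i j = C i j * Y j i := fun Y => if_neg hij
    have hji' : ∀ Y : Mat d, ducMap A C Y j i = C j i * Y i j := fun Y => if_neg hij.symm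
    rw [pow_succ', End.mul_apply, hij', hji', norm_mul, norm_mul, hCji,
      ← mul_max_of_nonneg _ _ (norm_nonneg _), max_comm, pow_succ', mul_assoc]
    exact mul_le_mul_of_nonneg_left ih (norm_nonneg _)

theorem mixing_iff_matMixing (hA : ColumnStochastic A) {Φ : End ℂ (Mat d)}
    (hΦ : diagLinearMap (Fin d) ℂ ℂ ∘ₗ Φ = markovOp A ∘ₗ diagLinearMap (Fin d) ℂ ℂ)
    (hoff : MatMixing A → ∀ X i j, i ≠ j → Tendsto (fun n => (Φ ^ n) X i j) atTop (𝓝 0)) :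
    Mixing Φ ↔ MatMixing A := by
  have hdiag : ∀ n X, ((Φ ^ n) X).diag = (markovOp A ^ n) X.diag := fun n X =>
    (LinearMap.congr_fun (commute_pow_left_of_commute hΦ.symm n) X).symm
  constructor
  · rintro ⟨ρ, ⟨-, htr⟩, hρ⟩
    refine hA.matMixing_of_mixesTo htr fun v => ?_
    simpa [Function.comp_def, hdiag, trace_diagonal] using
      (continuous_id.matrix_diag.tendsto _).comp (hρ (diagonal v))
  · intro h
    obtain ⟨π, hπ0, hπ1, hπ⟩ := hA.exists_mixesTo_of_matMixing h
    refine ⟨diagonal π, ⟨PosSemidef.diagonal hπ0, by rwa [trace_diagonal]⟩, fun X => ?_⟩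
    refine tendsto_pi_nhds.2 fun i => tendsto_pi_nhds.2 fun j => ?_
    rcases eq_or_ne i j with rfl | hij
    · simpa [← hdiag, trace] using tendsto_pi_nhds.1 (hπ X.diag) i
    · simpa [diagonal_apply_ne _ hij] using hoff h X i j hij

end Channels

/-- A CDUC channel `Φ_{A,B}` (resp. DUC channel `Φ_{A,C}`) is mixing
if and only if `A` is mixing. -/
theorem duc_mixing_iff (d : ℕ) (A : Matrix (Fin d) (Fin d) ℝ)
    (hA : ColumnStochastic A) :
    (∀ B : Mat d, B.PosSemidef → (∀ i, B i i = (A i i : ℂ)) →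
      (Mixing (cducMap A B) ↔ MatMixing A)) ∧
    (∀ C : Mat d, C.IsHermitian →
      (∀ i j, i ≠ j → Complex.normSq (C i j) ≤ A i j * A j i) →
      (Mixing (ducMap A C) ↔ MatMixing A)) := by
  refine ⟨fun B hB hBA => mixing_iff_matMixing hA (diagLinearMap_comp_cducMap B)
    fun h X i j hij => ?_, fun C hC hCA => mixing_iff_matMixing hA (diagLinearMap_comp_ducMap C)
    fun h X i j hij => ?_⟩
  · have hBij := hA.norm_lt_one_of_posSemidef h hB hBA hij
    simpa [cducMap_pow_apply_of_ne B hij] using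
      (tendsto_pow_atTop_nhds_zero_of_norm_lt_one hBij).mul_const (X i j)
  · have hCij := hA.norm_lt_one_of_normSq_le h hij (hCA i j hij)
    refine squeeze_zero_norm
      (fun n => (le_max_left _ _).trans (ducMap_pow_apply_norm_le hC hij n X)) ?_
    simpa using (tendsto_pow_atTop_nhds_zero_of_lt_one (norm_nonneg _) hCij).mul_const
      (max ‖X i j‖ ‖X j i‖)
end
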